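/- Monte Carlo concentration for the entropic operator: let g₁,...,g_N be i.i.d. real random variables with |g_n| ≤ B almost surely, and suppose B ≤ C·τ for constants C, τ > 0. Let L̂ = -τ·log((1/N)·Σ_n exp(-g_n/τ)) and L = -τ·log E[exp(-g₁/τ)]. Then P(|L̂ - L| ≥ ε) ≤ 2·exp(-c(C)·N·ε²/τ²) where c(C) = 2/((e^C - e^{-C})²·e^{2C}). -/

import Mathlib

/-!
The empirical mean of the bounded variables `exp (-gₙ / τ) ∈ [e^{-C}, e^C]` concentrates around
its expectation by Hoeffding's inequality. On `[e^{-C}, ∞)` the map `x ↦ -τ log x` is Lipschitz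
with constant `τ e^C`, so a deviation `ε` of the entropic values forces a deviation `ε / (τ e^C)`
of the means.
-/

open Real MeasureTheory ProbabilityTheory Finset
open scoped NNReal

namespace ProbabilityTheory

variable {Ω : Type*} [MeasurableSpace Ω] {μ : Measure Ω}

lemma HasSubgaussianMGF.measureReal_abs_ge_le {X : Ω → ℝ} {c : ℝ≥0}
    (h : HasSubgaussianMGF X c μ) {ε : ℝ} (hε : 0 ≤ ε) :
    μ.real {ω | ε ≤ |X ω|} ≤ 2 * exp (-ε ^ 2 / (2 * c)) := by
  have h_split : {ω | ε ≤ |X ω|} = {ω | ε ≤ X ω} ∪ {ω | ε ≤ (-X) ω} := by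
    ext ω
    simp [le_abs]
  calc μ.real {ω | ε ≤ |X ω|}
      ≤ μ.real {ω | ε ≤ X ω} + μ.real {ω | ε ≤ (-X) ω} := h_split ▸ measureReal_union_le _ _
    _ ≤ exp (-ε ^ 2 / (2 * c)) + exp (-ε ^ 2 / (2 * c)) :=
      add_le_add (h.measure_ge_le hε) (h.neg.measure_ge_le hε)
    _ = 2 * exp (-ε ^ 2 / (2 * c)) := by ring

lemma measureReal_abs_sum_sub_integral_ge_le [IsProbabilityMeasure μ] {ι : Type*}
    {X : ι → Ω → ℝ} (h_indep : iIndepFun X μ) (h_meas : ∀ i, AEMeasurable (X i) μ) {a b : ℝ}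
    (h_mem : ∀ i, ∀ᵐ ω ∂μ, X i ω ∈ Set.Icc a b) (s : Finset ι) {ε : ℝ} (hε : 0 ≤ ε) :
    μ.real {ω | ε ≤ |∑ i ∈ s, (X i ω - μ[X i])|} ≤
      2 * exp (-2 * ε ^ 2 / (#s * (b - a) ^ 2)) := by
  have h_indep' : iIndepFun (fun i ω => X i ω - μ[X i]) μ :=
    h_indep.comp (fun i y => y - ∫ ω, X i ω ∂μ) fun _ => measurable_id.sub_const _
  have h_subG := HasSubgaussianMGF.sum_of_iIndepFun h_indep' (s := s)
    fun i _ => hasSubgaussianMGF_of_mem_Icc (h_meas i) (h_mem i)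
  refine (h_subG.measureReal_abs_ge_le hε).trans_eq ?_
  simp only [sum_const, nsmul_eq_mul, NNReal.coe_mul, NNReal.coe_natCast, NNReal.coe_pow,
    NNReal.coe_div, coe_nnnorm, Real.norm_eq_abs, NNReal.coe_ofNat, div_pow, sq_abs]
  rw [show (2 : ℝ) * (#s * ((b - a) ^ 2 / 2 ^ 2)) = #s * (b - a) ^ 2 / 2 by ring,
    div_div_eq_mul_div]
  ring_nf

end ProbabilityTheory

lemma Real.abs_log_sub_log_le {c x y : ℝ} (hc : 0 < c) (hx : c ≤ x) (hy : c ≤ y) :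
    |log x - log y| ≤ |x - y| / c := by
  wlog hyx : y ≤ x generalizing x y
  · rw [abs_sub_comm, abs_sub_comm x]
    exact this hy hx (le_of_not_ge hyx)
  have hy₀ : 0 < y := hc.trans_le hy
  rw [abs_of_nonneg (sub_nonneg.2 (log_le_log hy₀ hyx)), abs_of_nonneg (sub_nonneg.2 hyx)]
  calc log x - log y = log (x / y) := (log_div (hy₀.trans_le hyx).ne' hy₀.ne').symm
    _ ≤ x / y - 1 := log_le_sub_one_of_pos (div_pos (hy₀.trans_le hyx) hy₀)
    _ = (x - y) / y := by field_simp
    _ ≤ (x - y) / c := div_le_div_of_nonneg_left (sub_nonneg.2 hyx) hc hy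

lemma exp_neg_div_mem_Icc_of_abs_le {x C τ : ℝ} (hτ : 0 < τ) (hx : |x| ≤ C * τ) :
    exp (-x / τ) ∈ Set.Icc (exp (-C)) (exp C) := by
  obtain ⟨hlo, hhi⟩ := abs_le.1 hx
  constructor <;> gcongr
  · rw [le_div_iff₀ hτ]
    linarith
  · rw [div_le_iff₀ hτ]
    linarith

lemma card_mul_div_le_abs_sum_sub_of_le_abs_log_mean_sub {ι : Type*} {s : Finset ι}
    (hs : s.Nonempty) {x : ι → ℝ} {c m τ ε : ℝ} (hc : 0 < c) (hτ : 0 < τ)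
    (hx : ∀ i ∈ s, c ≤ x i) (hm : c ≤ m)
    (h : ε ≤ |-τ * log ((1 / (#s : ℝ)) * ∑ i ∈ s, x i) - -τ * log m|) :
    #s * c * ε / τ ≤ |∑ i ∈ s, (x i - m)| := by
  set A := (1 / (#s : ℝ)) * ∑ i ∈ s, x i with hA_def
  have hn : (0 : ℝ) < #s := by exact_mod_cast hs.card_pos
  have hA : c ≤ A := by
    rw [hA_def, one_div, inv_mul_eq_div, le_div_iff₀ hn, mul_comm, ← nsmul_eq_mul]
    exact card_nsmul_le_sum s x c hx
  have h_sum : ∑ i ∈ s, (x i - m) = #s * (A - m) := by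
    rw [sum_sub_distrib, sum_const, nsmul_eq_mul, hA_def]
    field_simp
  have h_lip : c * ε ≤ τ * |A - m| := by
    rw [← mul_sub, abs_mul, abs_neg, abs_of_pos hτ] at h
    have := h.trans (mul_le_mul_of_nonneg_left (Real.abs_log_sub_log_le hc hA hm) hτ.le)
    rw [mul_div_assoc', le_div_iff₀ hc] at this
    linarith
  rw [h_sum, abs_mul, abs_of_pos hn, div_le_iff₀ hτ]
  linarith [mul_le_mul_of_nonneg_left h_lip hn.le]

theorem entropic_mc_concentration_general {Ω : Type*} [MeasurableSpace Ω]
    (μ : Measure Ω) [IsProbabilityMeasure μ] (N : ℕ) (hN : 0 < N)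
    (g : Fin N → Ω → ℝ)
    (hindep : iIndepFun g μ)
    (hident : ∀ n, IdentDistrib (g n) (g ⟨0, hN⟩) μ μ)
    (B C τ ε : ℝ) (hτ : 0 < τ) (hε : 0 < ε)
    (hbd : ∀ n, ∀ᵐ ω ∂μ, |g n ω| ≤ B) (hBC : B ≤ C * τ) :
    μ {ω | ε ≤ |(-τ * Real.log ((1 / (N : ℝ)) * ∑ n, Real.exp (-(g n ω) / τ))) -
        (-τ * Real.log (∫ ω', Real.exp (-(g ⟨0, hN⟩ ω') / τ) ∂μ))|} ≤
      ENNReal.ofReal (2 * Real.exp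
        (-(2 / ((Real.exp C - Real.exp (-C))^2 * Real.exp (2 * C))) *
          N * ε^2 / τ^2)) := by
  set X : Fin N → Ω → ℝ := fun n ω => exp (-(g n ω) / τ)
  have hφ : Measurable fun x : ℝ => exp (-x / τ) := by fun_prop
  have hX_meas n : AEMeasurable (X n) μ := hφ.comp_aemeasurable (hident n).aemeasurable_fst
  have hX_mem n : ∀ᵐ ω ∂μ, X n ω ∈ Set.Icc (exp (-C)) (exp C) := by
    filter_upwards [hbd n] with ω hω using exp_neg_div_mem_Icc_of_abs_le hτ (hω.trans hBC)
  have hX_mean n : μ[X n] = μ[X ⟨0, hN⟩] := ((hident n).comp hφ).integral_eq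
  have h_mean_mem := (convex_Icc _ _).integral_mem isClosed_Icc (hX_mem ⟨0, hN⟩)
    (Integrable.of_mem_Icc _ _ (hX_meas _) (hX_mem _))
  have h_event : ∀ᵐ ω ∂μ, ε ≤ |-τ * log ((1 / (N : ℝ)) * ∑ n, X n ω) - -τ * log μ[X ⟨0, hN⟩]| →
      N * exp (-C) * ε / τ ≤ |∑ n, (X n ω - μ[X n])| := by
    filter_upwards [ae_all_iff.2 hX_mem] with ω hω hε'
    simp only [hX_mean]
    simpa only [card_univ, Fintype.card_fin] using
      card_mul_div_le_abs_sum_sub_of_le_abs_log_mean_sub ⟨⟨0, hN⟩, mem_univ _⟩ (exp_pos _) hτ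
        (fun n _ => (hω n).1) h_mean_mem.1 (by simpa only [card_univ, Fintype.card_fin] using hε')
  have h_hoeffding := measureReal_abs_sum_sub_integral_ge_le (hindep.comp _ fun _ => hφ) hX_meas
    hX_mem univ (ε := N * exp (-C) * ε / τ) (by positivity)
  calc _ ≤ _ := measure_mono_ae h_event
    _ = ENNReal.ofReal (μ.real {ω | N * exp (-C) * ε / τ ≤ |∑ n, (X n ω - μ[X n])|}) :=
      (ofReal_measureReal (measure_ne_top _ _)).symm
    _ ≤ _ := ENNReal.ofReal_le_ofReal h_hoeffding
    _ = _ := by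
      congr 2
      rw [exp_neg, two_mul, exp_add]
      simp only [card_univ, Fintype.card_fin]
      field_simp

/-- Monte Carlo concentration for the entropic operator: for i.i.d. `g₁,…,g_N`
with `|gₙ| ≤ B` a.s. and `B ≤ C·τ`, the empirical entropic soft minimum
`L̂ = -τ·log((1/N)·∑ₙ exp(-gₙ/τ))` concentrates around
`L = -τ·log E[exp(-g₁/τ)]`:
`P(|L̂ - L| ≥ ε) ≤ 2·exp(-c(C)·N·ε²/τ²)` with
`c(C) = 2/((e^C - e^{-C})²·e^{2C})`. -/
theorem entropic_mc_concentration {Ω : Type*} [MeasurableSpace Ω]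
    (μ : Measure Ω) [IsProbabilityMeasure μ] (N : ℕ) (hN : 0 < N)
    (g : Fin N → Ω → ℝ) (hmeas : ∀ n, Measurable (g n))
    (hindep : iIndepFun g μ)
    (hident : ∀ n, IdentDistrib (g n) (g ⟨0, hN⟩) μ μ)
    (B C τ ε : ℝ) (hτ : 0 < τ) (hC : 0 < C) (hε : 0 < ε)
    (hbd : ∀ n, ∀ᵐ ω ∂μ, |g n ω| ≤ B) (hBC : B ≤ C * τ) :
    μ {ω | ε ≤ |(-τ * Real.log ((1 / (N : ℝ)) * ∑ n, Real.exp (-(g n ω) / τ))) -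
        (-τ * Real.log (∫ ω', Real.exp (-(g ⟨0, hN⟩ ω') / τ) ∂μ))|} ≤
      ENNReal.ofReal (2 * Real.exp
        (-(2 / ((Real.exp C - Real.exp (-C))^2 * Real.exp (2 * C))) *
          N * ε^2 / τ^2)) :=
  entropic_mc_concentration_general μ N hN g hindep hident B C τ ε hτ hε hbd hBC
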